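/- Let D be a division ring, A : Matrix m n D with m, n finite, and k ≤ |m|, k ≤ |n|. Suppose there are injections S : Fin k ↪ m and T : Fin k ↪ n such that the k×k submatrix A.submatrix S T is invertible, while every (k+1)×(k+1) square submatrix of A is not invertible. Then every column of A is a right linear combination of the columns indexed by T; that is, for every r : n there exist coefficients c : Fin k → D such that A i r = ∑ t, A i (T t) * c t for all i : m. -/

import Mathlib

/-!
Let `B = A.submatrix S T` and, for a column `r`, take `c = B⁻¹ (A (S ·) r)`, so that column `r`
and the combination `∑ t, A (·) (T t) * c t` agree on the rows of `S`. If they differed at some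
row `i`, then `i ∉ S` and `r ∉ T`, and bordering `B` by row `i` and column `r` gives a
`(k+1) × (k+1)` minor whose Schur complement with respect to `B` is the nonzero scalar
`A i r - ∑ t, A i (T t) * c t`; by the LDU factorization that minor is invertible,
contradicting maximality.
-/

namespace Matrix

section Blocks

variable {ι o α : Type*} [Ring α] [Fintype ι] [Fintype o] [DecidableEq ι] [DecidableEq o]

theorem isUnit_fromBlocks_one_zero_left (C : Matrix o ι α) :
    IsUnit (fromBlocks (1 : Matrix ι ι α) 0 C (1 : Matrix o o α)) :=
  isUnit_iff_exists.mpr ⟨fromBlocks 1 0 (-C) 1, by simp [fromBlocks_multiply],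
    by simp [fromBlocks_multiply]⟩

theorem isUnit_fromBlocks_one_zero_right (B : Matrix ι o α) :
    IsUnit (fromBlocks (1 : Matrix ι ι α) B 0 (1 : Matrix o o α)) :=
  isUnit_iff_exists.mpr ⟨fromBlocks 1 (-B) 0 1, by simp [fromBlocks_multiply],
    by simp [fromBlocks_multiply]⟩

theorem isUnit_fromBlocks_zero_zero {A : Matrix ι ι α} {D : Matrix o o α}
    (hA : IsUnit A) (hD : IsUnit D) : IsUnit (fromBlocks A 0 0 D) := by
  obtain ⟨u, rfl⟩ := hA
  obtain ⟨v, rfl⟩ := hD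
  exact isUnit_iff_exists.mpr ⟨fromBlocks ↑u⁻¹ 0 0 ↑v⁻¹, by simp [fromBlocks_multiply],
    by simp [fromBlocks_multiply]⟩

/- Mathlib's `fromBlocks_eq_of_invertible₁₁` is stated over a commutative ring; the same LDU
factorization holds over any ring. -/
theorem isUnit_fromBlocks_of_invertible₁₁ (A : Matrix ι ι α) (B : Matrix ι o α)
    (C : Matrix o ι α) (D : Matrix o o α) [Invertible A] (hS : IsUnit (D - C * ⅟A * B)) :
    IsUnit (fromBlocks A B C D) := by
  have hLDU : fromBlocks A B C D =
      fromBlocks 1 0 (C * ⅟A) 1 * fromBlocks A 0 0 (D - C * ⅟A * B) *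
        fromBlocks 1 (⅟A * B) 0 1 := by
    simp [fromBlocks_multiply, Matrix.mul_assoc, Matrix.mul_invOf_cancel_left]
  rw [hLDU]
  exact ((isUnit_fromBlocks_one_zero_left _).mul
    (isUnit_fromBlocks_zero_zero (isUnit_of_invertible A) hS)).mul
    (isUnit_fromBlocks_one_zero_right _)

theorem isUnit_fromBlocks_replicateCol_replicateRow [Unique o] (B : Matrix ι ι α)
    [Invertible B] (u v : ι → α) (a : α) (h : IsUnit (a - v ⬝ᵥ (⅟B *ᵥ u))) :
    IsUnit (fromBlocks B (replicateCol o u) (replicateRow o v) (of fun _ _ => a)) := by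
  refine isUnit_fromBlocks_of_invertible₁₁ _ _ _ _ ?_
  convert h.map (scalar o) using 1
  ext x y
  rw [Matrix.mul_assoc, ← replicateCol_mulVec]
  simp [Subsingleton.elim x y]

theorem isUnit_of_isUnit_submatrix_equiv {m : Type*} [Fintype m] [DecidableEq m]
    {M : Matrix m m α} (e : ι ≃ m) (h : IsUnit (M.submatrix e e)) : IsUnit M := by
  rw [← isUnit_map_iff (reindexAlgEquiv ℕ α e.symm)]
  simpa using h

end Blocks

section Minor

variable {m n α : Type*} (A : Matrix m n α) {k : ℕ} (S : Fin k ↪ m) (T : Fin k ↪ n)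

theorem submatrix_snoc_submatrix_finSumFinEquiv (i : m) (r : n) :
    (A.submatrix (Fin.snoc S i) (Fin.snoc T r)).submatrix finSumFinEquiv finSumFinEquiv =
      fromBlocks (A.submatrix S T) (replicateCol (Fin 1) fun s => A (S s) r)
        (replicateRow (Fin 1) fun t => A i (T t)) (of fun _ _ => A i r) := by
  ext (x | x) (y | y) <;> simp [Fin.snoc]

variable [Ring α] [Invertible (A.submatrix S T)]

theorem dotProduct_invOf_submatrix_mulVec_row (s : Fin k) (r : n) :
    (fun t => A (S s) (T t)) ⬝ᵥ (⅟(A.submatrix S T) *ᵥ fun s => A (S s) r) = A (S s) r := by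
  change (A.submatrix S T *ᵥ ⅟(A.submatrix S T) *ᵥ fun s => A (S s) r) s = _
  rw [mulVec_mulVec, mul_invOf_self, one_mulVec]

theorem dotProduct_invOf_submatrix_mulVec_col (i : m) (t : Fin k) :
    (fun t => A i (T t)) ⬝ᵥ (⅟(A.submatrix S T) *ᵥ fun s => A (S s) (T t)) = A i (T t) := by
  have hcol : (fun s => A (S s) (T t)) = A.submatrix S T *ᵥ Pi.single t 1 := by
    rw [mulVec_single_one]
    rfl
  rw [hcol, mulVec_mulVec, invOf_mul_self, one_mulVec, dotProduct_single, mul_one]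

theorem isUnit_submatrix_snoc {i : m} {r : n}
    (h : IsUnit (A i r - (fun t => A i (T t)) ⬝ᵥ (⅟(A.submatrix S T) *ᵥ fun s => A (S s) r))) :
    IsUnit (A.submatrix (Fin.snoc S i) (Fin.snoc T r)) := by
  refine isUnit_of_isUnit_submatrix_equiv finSumFinEquiv ?_
  rw [submatrix_snoc_submatrix_finSumFinEquiv]
  exact isUnit_fromBlocks_replicateCol_replicateRow _ _ _ _ h

end Minor

end Matrix

open Matrix

theorem stmt_3_general {D : Type*} [DivisionRing D] {m n : Type*} [Fintype m] [Fintype n]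
    (A : Matrix m n D) (k : ℕ)
    (S : Fin k ↪ m) (T : Fin k ↪ n)
    (hminor : IsUnit (A.submatrix ⇑S ⇑T))
    (hmax : ∀ (S' : Fin (k + 1) ↪ m) (T' : Fin (k + 1) ↪ n),
      ¬ IsUnit (A.submatrix ⇑S' ⇑T')) :
    ∀ r : n, ∃ c : Fin k → D, ∀ i : m, A i r = ∑ t, A i (T t) * c t := by
  intro r
  obtain ⟨_⟩ := hminor.nonempty_invertible
  refine ⟨⅟(A.submatrix S T) *ᵥ fun s => A (S s) r, fun i => ?_⟩
  by_contra hne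
  have hi : i ∉ Set.range S := by
    rintro ⟨s, rfl⟩
    exact hne (dotProduct_invOf_submatrix_mulVec_row A S T s r).symm
  have hr : r ∉ Set.range T := by
    rintro ⟨t, rfl⟩
    exact hne (dotProduct_invOf_submatrix_mulVec_col A S T i t).symm
  exact hmax (Fin.Embedding.snoc S hi) (Fin.Embedding.snoc T hr)
    (isUnit_submatrix_snoc A S T (sub_ne_zero.mpr hne).isUnit)

theorem stmt_3 {D : Type*} [DivisionRing D] {m n : Type*} [Fintype m] [Fintype n]
    (A : Matrix m n D) (k : ℕ) (hkm : k ≤ Fintype.card m) (hkn : k ≤ Fintype.card n)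
    (S : Fin k ↪ m) (T : Fin k ↪ n)
    (hminor : IsUnit (A.submatrix ⇑S ⇑T))
    (hmax : ∀ (S' : Fin (k + 1) ↪ m) (T' : Fin (k + 1) ↪ n),
      ¬ IsUnit (A.submatrix ⇑S' ⇑T')) :
    ∀ r : n, ∃ c : Fin k → D, ∀ i : m, A i r = ∑ t, A i (T t) * c t :=
  stmt_3_general A k S T hminor hmax
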